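/- For all real numbers γ01, γ02, γ03, γ04, γ13, γ14 (with the off-diagonal entries fixed as stated), the 5×5 real symmetric matrix D whose upper-triangular entries (rows and columns indexed 1–5) are row 1: (0, γ01, γ02, γ03, γ04); row 2 (from the diagonal): (1−2γ01, 0, −1/2, −1/2); row 3: (−2γ02, −1/2, 1/2); row 4: (γ33, 0); row 5: (γ44), is not positive semidefinite, for any choice of the real numbers γ33 and γ44. -/

import Mathlib

noncomputable def D (γ01 γ02 γ03 γ04 γ33 γ44 : ℝ) :
    Matrix (Fin 5) (Fin 5) ℝ :=
  !![0, γ01, γ02, γ03, γ04;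
     γ01, 1 - 2*γ01, 0, -1/2, -1/2;
     γ02, 0, -2*γ02, -1/2, 1/2;
     γ03, -1/2, -1/2, γ33, 0;
     γ04, -1/2, 1/2, 0, γ44]

/-!
The first diagonal entry of `D` vanishes, and in a positive semidefinite matrix a zero
diagonal entry forces its whole row to vanish (the `2 × 2` principal minor
`A i i * A j j - |A i j|²` is nonnegative). Hence `γ02 = 0`, so the diagonal entry
`-2 γ02` in the third row vanishes as well, contradicting the entry `-1/2` in that row.
-/

namespace Matrix.PosSemidef

open scoped ComplexOrder

variable {𝕜 n : Type*} [RCLike 𝕜]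

theorem apply_eq_zero_of_diag_eq_zero {A : Matrix n n 𝕜} (hA : A.PosSemidef) {i j : n}
    (hi : A i i = 0) : A i j = 0 := by
  have hminor := (hA.submatrix ![i, j]).det_nonneg
  have hji : A j i = star (A i j) := by simpa using (hA.1.apply j i).symm
  rw [det_fin_two] at hminor
  simp only [submatrix_apply, Matrix.cons_val_zero, Matrix.cons_val_one, hi, zero_mul,
    zero_sub, hji, RCLike.star_def, RCLike.mul_conj] at hminor
  have hnorm : ‖A i j‖ ^ 2 ≤ 0 := by exact_mod_cast neg_nonneg.mp hminor
  simpa using hnorm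

end Matrix.PosSemidef

theorem stmt13 (γ01 γ02 γ03 γ04 γ33 γ44 : ℝ) :
    ¬ (D γ01 γ02 γ03 γ04 γ33 γ44).PosSemidef := by
  intro hD
  have hγ02 : γ02 = 0 := by
    simpa [D] using hD.apply_eq_zero_of_diag_eq_zero (i := 0) (j := 2) (by simp [D])
  have h23 := hD.apply_eq_zero_of_diag_eq_zero (i := 2) (j := 3) (by simp [D, hγ02])
  simp [D] at h23
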